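/- For each m ∈ ℕ, the maps F_{m,n} : Γ → Γ_m converge uniformly to F_m : Γ → Γ_m as n → ∞; that is, for every ε > 0 there exists N such that for all n ≥ N and all x ∈ 𝕊, d_m(F_{m,n}(x), F_m(x)) < ε. -/

import Mathlib

noncomputable section

instance : Fact ((0 : ℝ) < 1) := ⟨one_pos⟩

/-- The closed dyadic arc of level `n` and index `j` in the circle `𝕊 = [0,1]/{0,1}`,
realized as `AddCircle (1 : ℝ)`: the image of `[j/2^n, (j+1)/2^n]`. -/
def dyadicArc (n j : ℕ) : Set (AddCircle (1 : ℝ)) :=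
  (fun r : ℝ => (r : AddCircle (1 : ℝ))) '' Set.Icc ((j : ℝ) / 2 ^ n) (((j : ℝ) + 1) / 2 ^ n)

/-- The left endpoint of the dyadic arc of level `n` and index `j`. -/
def leftPt (n j : ℕ) : AddCircle (1 : ℝ) := (((j : ℝ) / 2 ^ n : ℝ) : AddCircle (1 : ℝ))

/-- The right endpoint of the dyadic arc of level `n` and index `j`. -/
def rightPt (n j : ℕ) : AddCircle (1 : ℝ) := ((((j : ℝ) + 1) / 2 ^ n : ℝ) : AddCircle (1 : ℝ))

/-- `Δ` (given as a function of the level `n` and the index `j < 2^n` of a dyadic arc) is a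
dyadic diameter function of type `𝒮₁`: `Δ(𝕊) = 1`, `Δ` is positive, the two children of any
dyadic arc have equal `Δ`-value, which is either half of or equal to that of their parent,
and `max {Δ(I) : I ∈ ℐ_n} → 0` as `n → ∞`. -/
def IsS1 (Δ : ℕ → ℕ → ℝ) : Prop :=
  Δ 0 0 = 1 ∧
  (∀ n j : ℕ, j < 2 ^ n → 0 < Δ n j) ∧
  (∀ n j : ℕ, j < 2 ^ n → Δ (n + 1) (2 * j) = Δ (n + 1) (2 * j + 1) ∧
    (Δ (n + 1) (2 * j) = Δ n j / 2 ∨ Δ (n + 1) (2 * j) = Δ n j)) ∧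
  (∀ ε : ℝ, 0 < ε → ∃ N : ℕ, ∀ n ≥ N, ∀ j < 2 ^ n, Δ n j < ε)

/-- `c` is a chain of dyadic arcs (given by level-index pairs) joining `x` to `y`:
all indices are valid, the union of the arcs is connected, and it contains `x` and `y`. -/
def IsDyadicChain (N : ℕ) (c : Fin (N + 1) → ℕ × ℕ) (x y : AddCircle (1 : ℝ)) : Prop :=
  (∀ k, (c k).2 < 2 ^ (c k).1) ∧
  IsConnected (⋃ k, dyadicArc (c k).1 (c k).2) ∧
  x ∈ ⋃ k, dyadicArc (c k).1 (c k).2 ∧ y ∈ ⋃ k, dyadicArc (c k).1 (c k).2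

/-- The set of sums `Σ Δ'(J_k)` over all chains of dyadic arcs joining `x` and `y`. -/
def chainSums (Δ' : ℕ → ℕ → ℝ) (x y : AddCircle (1 : ℝ)) : Set ℝ :=
  {s | ∃ (N : ℕ) (c : Fin (N + 1) → ℕ × ℕ), IsDyadicChain N c x y ∧
    s = ∑ k, Δ' (c k).1 (c k).2}

/-- The distance associated to a weight `Δ'` on dyadic arcs:
`d(x,y) = inf Σ Δ'(J_k)` over all chains of dyadic arcs joining `x` and `y`. -/
def dOf (Δ' : ℕ → ℕ → ℝ) (x y : AddCircle (1 : ℝ)) : ℝ := sInf (chainSums Δ' x y)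

/-- The truncation `Δ_n` of `Δ`: `Δ_n(I) = Δ(I)` for arcs of level `≤ n`, and
`Δ_n(I) = ½ Δ_n(parent of I)` for arcs of level `> n`. -/
def trunc (Δ : ℕ → ℕ → ℝ) (n : ℕ) : ℕ → ℕ → ℝ := fun m j =>
  if m ≤ n then Δ m j else Δ n (j / 2 ^ (m - n)) / 2 ^ (m - n)

/-- A chain of dyadic arcs is minimal if the arcs have pairwise disjoint interiors and no
union of at least two distinct arcs from the chain equals a dyadic arc. -/
def IsMinimalChain (N : ℕ) (c : Fin (N + 1) → ℕ × ℕ) : Prop :=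
  (∀ k l : Fin (N + 1), k ≠ l →
    interior (dyadicArc (c k).1 (c k).2) ∩ interior (dyadicArc (c l).1 (c l).2) = ∅) ∧
  (∀ T : Finset (Fin (N + 1)), 2 ≤ T.card →
    ¬∃ m j : ℕ, j < 2 ^ m ∧ (⋃ k ∈ T, dyadicArc (c k).1 (c k).2) = dyadicArc m j)

/-- The piecewise-linear folding of `[0,1]`: it maps `[0,1/4]` onto `[0,1/2]`,
`[1/4,3/8]` onto `[1/2,3/4]`, `[3/8,1/2]` onto `[1/2,3/4]` reversing orientation,
`[1/2,5/8]` onto `[1/4,1/2]` reversing orientation, `[5/8,3/4]` onto `[1/4,1/2]`,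
and `[3/4,1]` onto `[1/2,1]`, each piece linearly. -/
def foldPhi (t : ℝ) : ℝ :=
  if t ≤ 3 / 8 then 2 * t else if t ≤ 5 / 8 then 3 / 2 - 2 * t else 2 * t - 1

/-- The canonical representative in `[0,1)` of a point of the circle. -/
def circRep (x : AddCircle (1 : ℝ)) : ℝ := ((AddCircle.equivIco 1 0) x).1

/-- The map `f_n : 𝕊 → 𝕊`: on each dyadic arc `I` of level `n`, it is the identity if the
children of `I` have `Δ`-value half that of `I`, and the folding map of `I` if the children
have `Δ`-value equal to that of `I`. -/
def foldMap (Δ : ℕ → ℕ → ℝ) (n : ℕ) (x : AddCircle (1 : ℝ)) : AddCircle (1 : ℝ) :=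
  let t : ℝ := circRep x
  let j : ℕ := ⌊t * 2 ^ n⌋₊
  if Δ (n + 1) (2 * j) = Δ n j then
    (((((j : ℝ) + foldPhi (t * 2 ^ n - (j : ℝ))) / 2 ^ n) : ℝ) : AddCircle (1 : ℝ))
  else x

/-- The composition `F_{m,n} = f_m ∘ f_{m+1} ∘ ⋯ ∘ f_n` (the identity if `n < m`). -/
def Fchain (Δ : ℕ → ℕ → ℝ) (m : ℕ) : ℕ → AddCircle (1 : ℝ) → AddCircle (1 : ℝ)
  | 0 => if m = 0 then foldMap Δ 0 else id
  | n + 1 => if m ≤ n then Fchain Δ m n ∘ foldMap Δ (n + 1)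
      else if m = n + 1 then foldMap Δ (n + 1) else id

/-- The set `𝒟_k` of dyadic points of level `k` in the circle. -/
def Dpts (k : ℕ) : Set (AddCircle (1 : ℝ)) :=
  {x | ∃ j : ℕ, x = (((j : ℝ) / 2 ^ k : ℝ) : AddCircle (1 : ℝ))}

/-- The set `𝒟 = ⋃ k, 𝒟_k` of all dyadic points of the circle. -/
def DptsAll : Set (AddCircle (1 : ℝ)) := ⋃ k, Dpts k

/-- `F` is the map `F_m : Γ → Γ_m`: it is `1`-Lipschitz from `d_Δ` to `d_m` and agrees on
dyadic points with the (eventually stable) limit of the maps `F_{m,n}` as `n → ∞`. -/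
def IsLimitMap (Δ : ℕ → ℕ → ℝ) (m : ℕ) (F : AddCircle (1 : ℝ) → AddCircle (1 : ℝ)) : Prop :=
  (∀ x y : AddCircle (1 : ℝ), dOf (trunc Δ m) (F x) (F y) ≤ dOf Δ x y) ∧
  (∀ x ∈ DptsAll, ∃ N : ℕ, ∀ n ≥ N, Fchain Δ m n x = F x)

/-- A subset `U` of a space with a distance function `d` is `δ`-connected if every pair of
points of `U` is joined by a finite sequence of points of `U` with consecutive
distances at most `δ`. -/
def DConn {α : Type*} (d : α → α → ℝ) (δ : ℝ) (U : Set α) : Prop :=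
  ∀ x ∈ U, ∀ y ∈ U, ∃ (N : ℕ) (c : Fin (N + 1) → α),
    (∀ i, c i ∈ U) ∧ c 0 = x ∧ c (Fin.last N) = y ∧
      ∀ i : Fin N, d (c i.castSucc) (c i.succ) ≤ δ

/-- `U` is a `δ`-component of `S`: a maximal `δ`-connected subset of `S`. -/
def DComp {α : Type*} (d : α → α → ℝ) (δ : ℝ) (S U : Set α) : Prop :=
  U ⊆ S ∧ DConn d δ U ∧ ∀ V : Set α, U ⊆ V → V ⊆ S → DConn d δ V → V = U

/-- The diameter of a set with respect to a distance function `d`. -/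
def ddiam {α : Type*} (d : α → α → ℝ) (S : Set α) : ℝ :=
  sSup {r | ∃ x ∈ S, ∃ y ∈ S, r = d x y}

/-!
Every `x` lies in a dyadic arc `I` of level `n + 1` whose left endpoint `p` is fixed by all
`f_k` with `k > n`, so `F_m p = F_{m,n} p`. Each `f_k` maps a dyadic arc of level `> k` into a
dyadic arc, either itself (identity) or one of level one less (folding), and the `Δ_k`-weight
of the image equals the `Δ_{k+1}`-weight of the arc. Hence `F_{m,n}` maps `I` into a single
dyadic arc `J` with `Δ_m(J) = Δ(I)`, and
`d_m(F_{m,n} x, F_m x) ≤ Δ_m(J) + d_m(F_m p, F_m x) ≤ Δ(I) + d_Δ(p, x) ≤ 2 Δ(I)`,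
which is uniformly small once `n` is large.
-/

open Set

theorem circRep_coe {u : ℝ} (hu : u ∈ Ico (0 : ℝ) 1) : circRep (u : AddCircle (1 : ℝ)) = u := by
  rw [circRep, AddCircle.equivIco_coe_eq (by simpa using hu)]

theorem coe_circRep (x : AddCircle (1 : ℝ)) : ((circRep x : ℝ) : AddCircle (1 : ℝ)) = x :=
  (AddCircle.equivIco 1 0).symm_apply_apply x

theorem circRep_mem_Ico (x : AddCircle (1 : ℝ)) : circRep x ∈ Ico (0 : ℝ) 1 := by
  simpa [circRep] using ((AddCircle.equivIco 1 0) x).2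

theorem coe_add_natCast (u : ℝ) (M : ℕ) : ((u + M : ℝ) : AddCircle (1 : ℝ)) = u := by
  rw [AddCircle.coe_add,
    show ((M : ℝ) : AddCircle (1 : ℝ)) = 0 from (AddCircle.coe_eq_zero_iff 1).2 ⟨M, by simp⟩,
    add_zero]

theorem mem_dyadicArc_iff {n b : ℕ} {x : AddCircle (1 : ℝ)} :
    x ∈ dyadicArc n b ↔
      ∃ u : ℝ, ((b : ℝ) ≤ u * 2 ^ n ∧ u * 2 ^ n ≤ b + 1) ∧ (u : AddCircle (1 : ℝ)) = x := by
  simp only [dyadicArc, mem_image, mem_Icc, div_le_iff₀ (by positivity : (0 : ℝ) < 2 ^ n),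
    le_div_iff₀ (by positivity : (0 : ℝ) < 2 ^ n)]

theorem exists_mem_dyadicArc (n : ℕ) (x : AddCircle (1 : ℝ)) : ∃ j < 2 ^ n, x ∈ dyadicArc n j := by
  obtain ⟨h₀, h₁⟩ := circRep_mem_Ico x
  have hpos : (0 : ℝ) ≤ circRep x * 2 ^ n := by positivity
  refine ⟨⌊circRep x * 2 ^ n⌋₊, (Nat.floor_lt hpos).2 ?_, mem_dyadicArc_iff.2
    ⟨circRep x, ⟨Nat.floor_le hpos, (Nat.lt_floor_add_one _).le⟩, coe_circRep x⟩⟩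
  push_cast
  nlinarith [pow_pos (two_pos : (0 : ℝ) < 2) n]

theorem leftPt_mem_dyadicArc (n j : ℕ) : leftPt n j ∈ dyadicArc n j :=
  mem_dyadicArc_iff.2 ⟨j / 2 ^ n, by field_simp; simp, rfl⟩

theorem mul_two_pow_mem_ancestor {u : ℝ} {l r b : ℕ}
    (hu : (b : ℝ) ≤ u * 2 ^ (l + r) ∧ u * 2 ^ (l + r) ≤ b + 1) :
    ((b / 2 ^ r : ℕ) : ℝ) ≤ u * 2 ^ l ∧ u * 2 ^ l ≤ (b / 2 ^ r : ℕ) + 1 := by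
  have h₂ : (0 : ℝ) < 2 ^ r := by positivity
  have hlo : ((b / 2 ^ r : ℕ) : ℝ) * 2 ^ r ≤ b := by exact_mod_cast Nat.div_mul_le_self b (2 ^ r)
  have hhi : (b : ℝ) + 1 ≤ ((b / 2 ^ r : ℕ) + 1) * 2 ^ r := by
    exact_mod_cast (Nat.lt_div_mul_add (b := 2 ^ r) (by positivity)).trans_eq (by ring)
  rw [pow_add, ← mul_assoc] at hu
  exact ⟨le_of_mul_le_mul_right (by linarith) h₂, le_of_mul_le_mul_right (by linarith) h₂⟩

theorem dyadicArc_subset_ancestor (l r b : ℕ) : dyadicArc (l + r) b ⊆ dyadicArc l (b / 2 ^ r) := by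
  intro x hx
  obtain ⟨u, hu, rfl⟩ := mem_dyadicArc_iff.1 hx
  exact mem_dyadicArc_iff.2 ⟨u, mul_two_pow_mem_ancestor hu, rfl⟩

theorem foldPhi_of_le {t : ℝ} (ht : t ≤ 3 / 8) : foldPhi t = 2 * t := if_pos ht

theorem foldPhi_of_mem_Icc {t : ℝ} (h₁ : 3 / 8 ≤ t) (h₂ : t ≤ 5 / 8) :
    foldPhi t = 3 / 2 - 2 * t := by
  unfold foldPhi; split_ifs <;> linarith

theorem foldPhi_of_ge {t : ℝ} (ht : 5 / 8 ≤ t) : foldPhi t = 2 * t - 1 := by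
  unfold foldPhi; split_ifs <;> linarith

/-- For `s ≥ 2` the breakpoints `3/8`, `5/8` of `foldPhi` lie on the grid of level `s + 1`, so
each interval of that grid lies on one linear piece; the levels `s ≤ 1` are checked by hand. -/
theorem exists_dyadic_bounds_foldPhi (s a : ℕ) (ha : a < 2 ^ (s + 1)) :
    ∃ b : ℕ, b < 2 ^ s ∧ ∀ v : ℝ, (a : ℝ) ≤ v * 2 ^ (s + 1) → v * 2 ^ (s + 1) ≤ a + 1 →
      (b : ℝ) ≤ foldPhi v * 2 ^ s ∧ foldPhi v * 2 ^ s ≤ b + 1 := by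
  match s with
  | 0 =>
    refine ⟨0, one_pos, fun v h₁ h₂ => ?_⟩
    have ha' : (a : ℝ) ≤ 1 := by exact_mod_cast Nat.lt_succ_iff.1 ha
    have ha₀ : (0 : ℝ) ≤ a := a.cast_nonneg
    norm_num at h₁ h₂ ⊢
    unfold foldPhi
    split_ifs <;> constructor <;> linarith
  | 1 =>
    refine ⟨a % 2, Nat.mod_lt _ two_pos, fun v h₁ h₂ => ?_⟩
    interval_cases a <;> norm_num at h₁ h₂ ⊢ <;> unfold foldPhi <;> split_ifs <;>
      constructor <;> linarith
  | s + 2 =>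
    have hP : (0 : ℝ) < 2 ^ s := by positivity
    have h₈ : (2 : ℝ) ^ (s + 2 + 1) = 8 * 2 ^ s := by ring
    have h₄ : (2 : ℝ) ^ (s + 2) = 4 * 2 ^ s := by ring
    have h₄ℕ : 2 ^ (s + 2) = 4 * 2 ^ s := by ring
    rw [show 2 ^ (s + 2 + 1) = 8 * 2 ^ s by ring] at ha
    simp only [h₈, h₄]
    rcases lt_or_ge a (3 * 2 ^ s) with ha₁ | ha₁
    · refine ⟨a, by omega, fun v h₁ h₂ => ?_⟩
      have : (a : ℝ) + 1 ≤ 3 * 2 ^ s := by exact_mod_cast ha₁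
      rw [foldPhi_of_le (by nlinarith)]
      constructor <;> linarith
    rcases lt_or_ge a (5 * 2 ^ s) with ha₂ | ha₂
    · refine ⟨6 * 2 ^ s - a - 1, by omega, fun v h₁ h₂ => ?_⟩
      have hb : ((6 * 2 ^ s - a - 1 : ℕ) : ℝ) + a + 1 = 6 * 2 ^ s := by
        exact_mod_cast (by omega : 6 * 2 ^ s - a - 1 + a + 1 = 6 * 2 ^ s)
      have : 3 * 2 ^ s ≤ (a : ℝ) := by exact_mod_cast ha₁
      have : (a : ℝ) + 1 ≤ 5 * 2 ^ s := by exact_mod_cast ha₂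
      rw [foldPhi_of_mem_Icc (by nlinarith) (by nlinarith)]
      constructor <;> linarith
    · refine ⟨a - 4 * 2 ^ s, by omega, fun v h₁ h₂ => ?_⟩
      have hb : ((a - 4 * 2 ^ s : ℕ) : ℝ) + 4 * 2 ^ s = a := by
        exact_mod_cast (by omega : a - 4 * 2 ^ s + 4 * 2 ^ s = a)
      have : 5 * 2 ^ s ≤ (a : ℝ) := by exact_mod_cast ha₂
      rw [foldPhi_of_ge (by nlinarith)]
      constructor <;> linarith

section foldMap

variable {Δ : ℕ → ℕ → ℝ}

theorem foldMap_coe_of_floor_eq {k j : ℕ} {u : ℝ} (hu : u ∈ Ico (0 : ℝ) 1)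
    (hj : ⌊u * 2 ^ k⌋₊ = j) :
    foldMap Δ k u = if Δ (k + 1) (2 * j) = Δ k j then
      (((j + foldPhi (u * 2 ^ k - j)) / 2 ^ k : ℝ) : AddCircle (1 : ℝ)) else u := by
  simp only [foldMap, circRep_coe hu, hj]

theorem foldMap_coe_natCast_div (k M : ℕ) :
    foldMap Δ k ((M / 2 ^ k : ℝ) : AddCircle (1 : ℝ)) = ((M / 2 ^ k : ℝ) : AddCircle (1 : ℝ)) := by
  have h₂ : (0 : ℝ) < 2 ^ k := by positivity
  have hsplit : (M / 2 ^ k : ℝ) = ((M % 2 ^ k : ℕ) : ℝ) / 2 ^ k + (M / 2 ^ k : ℕ) := by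
    field_simp
    exact_mod_cast (Nat.mod_add_div M (2 ^ k)).symm.trans (by ring)
  have hlt : ((M % 2 ^ k : ℕ) : ℝ) < 2 ^ k := by exact_mod_cast Nat.mod_lt M (by positivity)
  rw [hsplit, coe_add_natCast, foldMap_coe_of_floor_eq (j := M % 2 ^ k)
    ⟨by positivity, (div_lt_one h₂).2 hlt⟩ (by field_simp; exact Nat.floor_natCast _)]
  norm_num [foldPhi]

theorem foldMap_coe_of_mem {k j : ℕ} {u : ℝ} (hj : j < 2 ^ k)
    (hu : (j : ℝ) ≤ u * 2 ^ k ∧ u * 2 ^ k ≤ j + 1) :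
    foldMap Δ k u = if Δ (k + 1) (2 * j) = Δ k j then
      (((j + foldPhi (u * 2 ^ k - j)) / 2 ^ k : ℝ) : AddCircle (1 : ℝ)) else u := by
  have h₂ : (0 : ℝ) < 2 ^ k := by positivity
  have hj' : (j : ℝ) + 1 ≤ 2 ^ k := by exact_mod_cast hj
  rcases hu.2.lt_or_eq with hlt | heq
  · refine foldMap_coe_of_floor_eq ⟨?_, ?_⟩ ((Nat.floor_eq_iff (by linarith)).2 ⟨hu.1, hlt⟩)
    · nlinarith
    · nlinarith
  -- At the right endpoint the floor is `j + 1`, not `j`; both sides are `u` there anyway.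
  · have hu' : u = ((j + 1 : ℕ) : ℝ) / 2 ^ k := by push_cast; field_simp; linarith
    have hφ : foldPhi (u * 2 ^ k - j) = 1 := by rw [heq]; norm_num [foldPhi]
    rw [hφ, ← Nat.cast_succ, ← hu', ite_self, hu', foldMap_coe_natCast_div]

theorem foldMap_eq_self_of_mem_Dpts {k r : ℕ} (hr : r ≤ k) {x : AddCircle (1 : ℝ)}
    (hx : x ∈ Dpts r) : foldMap Δ k x = x := by
  obtain ⟨i, rfl⟩ := hx
  have h : (i / 2 ^ r : ℝ) = ((i * 2 ^ (k - r) : ℕ) : ℝ) / 2 ^ k := by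
    obtain ⟨d, rfl⟩ := Nat.exists_eq_add_of_le hr
    rw [Nat.add_sub_cancel_left]
    push_cast
    field_simp
    ring
  rw [h, foldMap_coe_natCast_div]

theorem trunc_add (k s b : ℕ) : trunc Δ k (k + s) b = Δ k (b / 2 ^ s) / 2 ^ s := by
  rcases s.eq_zero_or_pos with rfl | hs
  · simp [trunc]
  · rw [trunc, if_neg (by omega), Nat.add_sub_cancel_left]

theorem trunc_nonneg (hΔ : IsS1 Δ) (k : ℕ) {l b : ℕ} (hb : b < 2 ^ l) : 0 ≤ trunc Δ k l b := by
  unfold trunc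
  split_ifs with h
  · exact (hΔ.2.1 l b hb).le
  · refine div_nonneg (hΔ.2.1 k _ (Nat.div_lt_of_lt_mul ?_)).le (by positivity)
    rwa [← pow_add, Nat.sub_add_cancel (by omega)]

theorem IsS1.apply_eq_apply_two_mul_div_two (hΔ : IsS1 Δ) {k j : ℕ} (hj : j < 2 ^ (k + 1)) :
    Δ (k + 1) j = Δ (k + 1) (2 * (j / 2)) := by
  have hsib := (hΔ.2.2.1 k (j / 2) (by rw [pow_succ] at hj; omega)).1
  rcases Nat.even_or_odd' j with ⟨i, rfl | rfl⟩
  · simp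
  · rw [show (2 * i + 1) / 2 = i by omega] at hsib ⊢
    exact hsib.symm

theorem foldMap_eqOn_of_not_fold {k j : ℕ} (hj : j < 2 ^ k)
    (hfold : Δ (k + 1) (2 * j) ≠ Δ k j) : EqOn (foldMap Δ k) id (dyadicArc k j) := by
  intro x hx
  obtain ⟨u, hu, rfl⟩ := mem_dyadicArc_iff.1 hx
  rw [foldMap_coe_of_mem hj hu, if_neg hfold, id]

theorem foldMap_mapsTo_of_fold {k s b : ℕ} (hb : b < 2 ^ (k + 1 + s))
    (hfold : Δ (k + 1) (2 * (b / 2 ^ (s + 1))) = Δ k (b / 2 ^ (s + 1))) :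
    ∃ b' : ℕ, b' < 2 ^ (k + s) ∧ b' / 2 ^ s = b / 2 ^ (s + 1) ∧
      MapsTo (foldMap Δ k) (dyadicArc (k + 1 + s) b) (dyadicArc (k + s) b') := by
  set j := b / 2 ^ (s + 1)
  set a := b % 2 ^ (s + 1)
  have hks : k + 1 + s = s + 1 + k := by omega
  have hj : j < 2 ^ k := Nat.div_lt_of_lt_mul (by rwa [← pow_add, ← hks])
  obtain ⟨b₂, hb₂, hφ⟩ := exists_dyadic_bounds_foldPhi s a (Nat.mod_lt _ (by positivity))
  refine ⟨j * 2 ^ s + b₂, ?_, ?_, ?_⟩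
  · calc j * 2 ^ s + b₂ < (j + 1) * 2 ^ s := by rw [add_mul, one_mul]; omega
      _ ≤ 2 ^ k * 2 ^ s := Nat.mul_le_mul_right _ hj
      _ = 2 ^ (k + s) := (pow_add 2 k s).symm
  · rw [add_comm, Nat.add_mul_div_right _ _ (by positivity), Nat.div_eq_of_lt hb₂, zero_add]
  intro x hx
  obtain ⟨u, hu, rfl⟩ := mem_dyadicArc_iff.1 hx
  have hu' := mul_two_pow_mem_ancestor (l := k) (r := s + 1) (by rwa [add_comm k, ← hks])
  rw [foldMap_coe_of_mem hj hu', if_pos hfold]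
  have hba : (b : ℝ) = j * 2 ^ (s + 1) + a := by
    exact_mod_cast ((Nat.div_add_mod b (2 ^ (s + 1))).symm.trans (by ring))
  have hv : (u * 2 ^ k - j) * 2 ^ (s + 1) = u * 2 ^ (k + 1 + s) - j * 2 ^ (s + 1) := by ring
  obtain ⟨hφ₁, hφ₂⟩ := hφ (u * 2 ^ k - j) (by linarith [hu.1]) (by linarith [hu.2])
  have hw : (j + foldPhi (u * 2 ^ k - j)) / 2 ^ k * 2 ^ (k + s)
      = j * 2 ^ s + foldPhi (u * 2 ^ k - j) * 2 ^ s := by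
    rw [pow_add]; field_simp
  refine mem_dyadicArc_iff.2 ⟨_, ?_, rfl⟩
  rw [hw]
  push_cast
  constructor <;> linarith

theorem foldMap_mapsTo_dyadicArc (hΔ : IsS1 Δ) {k s b : ℕ} (hb : b < 2 ^ (k + 1 + s)) :
    ∃ s' b' : ℕ, b' < 2 ^ (k + s') ∧ trunc Δ k (k + s') b' = trunc Δ (k + 1) (k + 1 + s) b ∧
      MapsTo (foldMap Δ k) (dyadicArc (k + 1 + s) b) (dyadicArc (k + s') b') := by
  set j := b / 2 ^ (s + 1)
  have hks : k + 1 + s = k + (s + 1) := by omega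
  have hj : j < 2 ^ k := Nat.div_lt_of_lt_mul (by rwa [← pow_add, add_comm, ← hks])
  have hchild : Δ (k + 1) (b / 2 ^ s) = Δ (k + 1) (2 * j) := by
    rw [hΔ.apply_eq_apply_two_mul_div_two (Nat.div_lt_of_lt_mul (by rwa [← pow_add, add_comm])),
      Nat.div_div_eq_div_mul, ← pow_succ]
  by_cases hfold : Δ (k + 1) (2 * j) = Δ k j
  · obtain ⟨b', hb', hdiv, hmaps⟩ := foldMap_mapsTo_of_fold hb hfold
    exact ⟨s, b', hb', by rw [trunc_add, trunc_add, hdiv, hchild, hfold], hmaps⟩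
  · have hhalf : Δ (k + 1) (2 * j) = Δ k j / 2 := (hΔ.2.2.1 k j hj).2.resolve_right hfold
    rw [hks] at hb ⊢
    refine ⟨s + 1, b, hb, ?_, fun x hx => ?_⟩
    · rw [trunc_add k (s + 1), ← hks, trunc_add, hchild, hhalf]
      ring
    · rw [foldMap_eqOn_of_not_fold hj hfold (dyadicArc_subset_ancestor k (s + 1) b hx)]
      exact hx

end foldMap

section Fchain

variable {Δ : ℕ → ℕ → ℝ} {m n : ℕ}

theorem Fchain_self (Δ : ℕ → ℕ → ℝ) (m : ℕ) : Fchain Δ m m = foldMap Δ m := by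
  cases m <;> simp [Fchain]

theorem Fchain_succ (h : m ≤ n) : Fchain Δ m (n + 1) = Fchain Δ m n ∘ foldMap Δ (n + 1) := by
  simp [Fchain, h]

theorem Fchain_mapsTo_dyadicArc (hΔ : IsS1 Δ) (hmn : m ≤ n) {s b : ℕ}
    (hb : b < 2 ^ (n + 1 + s)) :
    ∃ s' b' : ℕ, b' < 2 ^ (m + s') ∧ trunc Δ m (m + s') b' = trunc Δ (n + 1) (n + 1 + s) b ∧
      MapsTo (Fchain Δ m n) (dyadicArc (n + 1 + s) b) (dyadicArc (m + s') b') := by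
  induction n, hmn using Nat.le_induction generalizing s b with
  | base => exact Fchain_self Δ m ▸ foldMap_mapsTo_dyadicArc hΔ hb
  | succ n hmn ih =>
    obtain ⟨s₁, b₁, hb₁, htrunc₁, hmaps₁⟩ := foldMap_mapsTo_dyadicArc hΔ hb
    obtain ⟨s', b', hb', htrunc, hmaps⟩ := ih hb₁
    exact ⟨s', b', hb', htrunc.trans htrunc₁, Fchain_succ hmn ▸ hmaps.comp hmaps₁⟩

theorem Fchain_eq_of_mem_Dpts (hmn : m ≤ n) {x : AddCircle (1 : ℝ)} (hx : x ∈ Dpts (n + 1))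
    {n' : ℕ} (hn' : n ≤ n') : Fchain Δ m n' x = Fchain Δ m n x := by
  induction n', hn' using Nat.le_induction with
  | base => rfl
  | succ n' hn' ih =>
    rw [Fchain_succ (hmn.trans hn'), Function.comp_apply,
      foldMap_eq_self_of_mem_Dpts (by omega) hx, ih]

theorem IsLimitMap.apply_eq_Fchain {F : AddCircle (1 : ℝ) → AddCircle (1 : ℝ)}
    (hF : IsLimitMap Δ m F) (hmn : m ≤ n) {x : AddCircle (1 : ℝ)} (hx : x ∈ Dpts (n + 1)) :
    F x = Fchain Δ m n x := by
  obtain ⟨N, hN⟩ := hF.2 x (mem_iUnion.2 ⟨n + 1, hx⟩)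
  rw [← hN (max n N) (le_max_right n N), Fchain_eq_of_mem_Dpts hmn hx (le_max_left n N)]

end Fchain

section dOf

variable {Δ' : ℕ → ℕ → ℝ}

theorem single_mem_chainSums {l b : ℕ} (hb : b < 2 ^ l) {x y : AddCircle (1 : ℝ)}
    (hx : x ∈ dyadicArc l b) (hy : y ∈ dyadicArc l b) : Δ' l b ∈ chainSums Δ' x y := by
  refine ⟨0, fun _ => (l, b), ⟨fun _ => hb, ?_, ?_, ?_⟩, by simp⟩ <;> rw [iUnion_const]
  · exact (isConnected_Icc (by gcongr; linarith)).image _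
      (AddCircle.continuous_mk' 1).continuousOn
  · exact hx
  · exact hy

theorem chainSums_nonempty (x y : AddCircle (1 : ℝ)) : (chainSums Δ' x y).Nonempty := by
  obtain ⟨j, hj, hx⟩ := exists_mem_dyadicArc 0 x
  obtain ⟨k, hk, hy⟩ := exists_mem_dyadicArc 0 y
  obtain rfl : j = 0 := by simpa using hj
  obtain rfl : k = 0 := by simpa using hk
  exact ⟨_, single_mem_chainSums hj hx hy⟩

theorem add_mem_chainSums {l b : ℕ} (hb : b < 2 ^ l) {x y z : AddCircle (1 : ℝ)}
    (hx : x ∈ dyadicArc l b) (hy : y ∈ dyadicArc l b) {s : ℝ} (hs : s ∈ chainSums Δ' y z) :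
    Δ' l b + s ∈ chainSums Δ' x z := by
  obtain ⟨N, c, ⟨hc, hconn, hyc, hzc⟩, rfl⟩ := hs
  set c' : Fin (N + 1 + 1) → ℕ × ℕ := Fin.cons (l, b) c
  have hU : ⋃ k, dyadicArc (c' k).1 (c' k).2 = dyadicArc l b ∪ ⋃ k, dyadicArc (c k).1 (c k).2 := by
    ext t
    simp [c', Fin.exists_fin_succ]
  refine ⟨N + 1, c', ⟨Fin.cases hb hc, ?_, ?_, ?_⟩, by simp [c', Fin.sum_univ_succ]⟩
    <;> rw [hU]
  · exact (((isConnected_Icc (by gcongr; linarith)).image _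
      (AddCircle.continuous_mk' 1).continuousOn)).union ⟨y, hy, hyc⟩ hconn
  · exact Or.inl hx
  · exact Or.inr hzc

variable (hΔ' : ∀ l b, b < 2 ^ l → 0 ≤ Δ' l b)
include hΔ'

theorem chainSums_bddBelow (x y : AddCircle (1 : ℝ)) : BddBelow (chainSums Δ' x y) := by
  refine ⟨0, ?_⟩
  rintro _ ⟨N, c, hc, rfl⟩
  exact Finset.sum_nonneg fun k _ => hΔ' _ _ (hc.1 k)

theorem dOf_le_of_mem_dyadicArc {l b : ℕ} (hb : b < 2 ^ l) {x y : AddCircle (1 : ℝ)}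
    (hx : x ∈ dyadicArc l b) (hy : y ∈ dyadicArc l b) : dOf Δ' x y ≤ Δ' l b :=
  csInf_le (chainSums_bddBelow hΔ' x y) (single_mem_chainSums hb hx hy)

theorem dOf_le_add_of_mem_dyadicArc {l b : ℕ} (hb : b < 2 ^ l) {x y : AddCircle (1 : ℝ)}
    (hx : x ∈ dyadicArc l b) (hy : y ∈ dyadicArc l b) (z : AddCircle (1 : ℝ)) :
    dOf Δ' x z ≤ Δ' l b + dOf Δ' y z := by
  rw [← sub_le_iff_le_add']
  exact le_csInf (chainSums_nonempty y z) fun s hs =>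
    sub_le_iff_le_add'.2 (csInf_le (chainSums_bddBelow hΔ' x z) (add_mem_chainSums hb hx hy hs))

end dOf

/-- For each `m`, the maps `F_{m,n} : Γ → Γ_m` converge uniformly to `F_m : Γ → Γ_m`
as `n → ∞`. -/
theorem Fchain_tendstoUniformly_limitMap (Δ : ℕ → ℕ → ℝ) (hΔ : IsS1 Δ) (m : ℕ)
    (F : AddCircle (1 : ℝ) → AddCircle (1 : ℝ)) (hF : IsLimitMap Δ m F) :
    ∀ ε : ℝ, 0 < ε → ∃ N : ℕ, ∀ n ≥ N, ∀ x : AddCircle (1 : ℝ),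
      dOf (trunc Δ m) (Fchain Δ m n x) (F x) < ε := by
  intro ε hε
  obtain ⟨N, hN⟩ := hΔ.2.2.2 (ε / 2) (half_pos hε)
  refine ⟨N + m, fun n hn x => ?_⟩
  have hmn : m ≤ n := by omega
  obtain ⟨j, hj, hx⟩ := exists_mem_dyadicArc (n + 1) x
  set p := leftPt (n + 1) j
  have hp : p ∈ dyadicArc (n + 1) j := leftPt_mem_dyadicArc (n + 1) j
  obtain ⟨s, b, hb, htrunc, hmaps⟩ := Fchain_mapsTo_dyadicArc (s := 0) hΔ hmn hj
  rw [show trunc Δ (n + 1) (n + 1 + 0) j = Δ (n + 1) j from if_pos le_rfl] at htrunc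
  have hFp : F p = Fchain Δ m n p := hF.apply_eq_Fchain hmn ⟨j, rfl⟩
  have hΔpos : ∀ l b, b < 2 ^ l → 0 ≤ Δ l b := fun l b hb => (hΔ.2.1 l b hb).le
  calc dOf (trunc Δ m) (Fchain Δ m n x) (F x)
      ≤ trunc Δ m (m + s) b + dOf (trunc Δ m) (F p) (F x) :=
        dOf_le_add_of_mem_dyadicArc (fun _ _ => trunc_nonneg hΔ m) hb (hmaps hx)
          (hFp ▸ hmaps hp) _
    _ ≤ Δ (n + 1) j + dOf Δ p x := add_le_add htrunc.le (hF.1 p x)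
    _ ≤ Δ (n + 1) j + Δ (n + 1) j := by
        gcongr; exact dOf_le_of_mem_dyadicArc hΔpos hj hp hx
    _ < ε := by linarith [hN (n + 1) (by omega) j hj]
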